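/- arXiv:1807.09707 — 2 statements merged into one kernel-verified Lean document; each statement's English description precedes it below -/
import Mathlib

section
/- Let g ∈ L²(ℝ, γ) have Hermite expansion g = Σ_{m≥0} c_m H_m, and define T_k(g) = Σ_{m≥k} c_m H_{m-k}. Then for any integers k, l ≥ 1, the l-th derivative of T_k(g) satisfies (T_k g)^{(l)} = Σ_{i=0}^{l} C(l,i) α_{k,i} T_{k+i}(g^{(l-i)}), where α_{k,i} = (-1)^i k(k+1)⋯(k+i-1) (with α_{k,0} = 1), whenever all terms are well defined in L²(ℝ,γ). -/
/-!
Since `H_m' = m H_{m-1}`, differentiating `T_k g` termwise `l` times multiplies the coefficient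
`c_{m+k+l}` of `H_m` by `(m+l)(m+l-1)⋯(m+1)`, while the coefficient of `H_m` in
`T_{k+i}(g^{(l-i)})` is `c_{m+k+l}` times the falling factorial of `m+k+l` of length `l-i`.
The identity is therefore the Chu–Vandermonde convolution for falling factorials evaluated at
`x = -k`, `y = m+k+l`, the falling factorial of `-k` of length `i` being `α_{k,i}`.
-/

open Polynomial Finset

theorem derivative_hermite_succ (n : ℕ) : derivative (hermite (n + 1)) = (n + 1) • hermite n := by
  induction n with
  | zero => simp [hermite_zero]
  | succ n ih =>
    rw [hermite_succ (n + 1), derivative_sub, derivative_mul, derivative_X, one_mul, ih,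
      derivative_smul, hermite_succ n]
    simp only [nsmul_eq_mul, Nat.cast_add, Nat.cast_one]
    ring

theorem iterate_derivative_hermite (n l : ℕ) :
    derivative^[l] (hermite n) = n.descFactorial l • hermite (n - l) := by
  induction l with
  | zero => simp
  | succ l ih =>
    rw [Function.iterate_succ_apply', ih, derivative_smul]
    rcases lt_or_ge l n with hln | hnl
    · obtain ⟨j, hj⟩ : ∃ j, n - l = j + 1 := ⟨n - (l + 1), by omega⟩
      rw [hj, derivative_hermite_succ, smul_smul, Nat.descFactorial_succ, mul_comm, ← hj,
        show n - (l + 1) = j by omega]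
    · rw [Nat.descFactorial_eq_zero_iff_lt.mpr (by omega : n < l + 1), Nat.sub_eq_zero_of_le hnl,
        hermite_zero]
      simp

theorem descPochhammer_smeval_eq_eval {R : Type*} [CommRing R] (r : R) (n : ℕ) :
    (descPochhammer ℤ n).smeval r = (descPochhammer R n).eval r := by
  rw [← aeval_eq_smeval, aeval_def, ← eval_map, descPochhammer_map]

theorem descPochhammer_eval_neg_natCast {R : Type*} [CommRing R] (k n : ℕ) :
    (descPochhammer R n).eval (-(k : R)) = (-1) ^ n * k.ascFactorial n := by
  have h := ascPochhammer_eval_neg_eq_descPochhammer R (-(k : R)) n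
  rw [neg_neg, ← ascPochhammer_eval_cast, ascPochhammer_nat_eq_ascFactorial] at h
  rw [h, ← mul_assoc, ← pow_add, Even.neg_one_pow ⟨n, rfl⟩, one_mul]

/-- Chu–Vandermonde for falling factorials, split as `n = -k + (n + k)`. -/
theorem Nat.cast_descFactorial_eq_sum {R : Type*} [CommRing R] (n k l : ℕ) :
    (n.descFactorial l : R) = ∑ i ∈ range (l + 1),
      l.choose i * ((-1 : R) ^ i * k.ascFactorial i) * (n + k).descFactorial (l - i) := by
  have h := Ring.descPochhammer_smeval_add l (Commute.all (-(k : R)) ((n + k : ℕ) : R))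
  rw [show -(k : R) + ((n + k : ℕ) : R) = n by push_cast; ring,
    Nat.sum_antidiagonal_eq_sum_range_succ_mk] at h
  simp only [descPochhammer_smeval_eq_eval, descPochhammer_eval_eq_descFactorial,
    descPochhammer_eval_neg_natCast] at h
  rw [h]
  exact sum_congr rfl fun i _ => by ring

theorem tsum_nat_add_of_eq_zero {M : Type*} [AddCommMonoid M] [TopologicalSpace M] {f : ℕ → M}
    {k : ℕ} (hf : ∀ i < k, f i = 0) : ∑' i, f (i + k) = ∑' i, f i := by
  refine (add_left_injective k).tsum_eq fun i hi => ⟨i - k, ?_⟩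
  have : k ≤ i := not_lt.mp fun h => hi (hf i h)
  simp [Nat.sub_add_cancel this]

theorem hermite_shift_iteratedDeriv_general (c : ℕ → ℝ) (k l : ℕ)
    (hterm : ∀ x : ℝ,
      iteratedDeriv l (fun y : ℝ => ∑' m : ℕ, c (m + k) * (aeval y (hermite m) : ℝ)) x
        = ∑' m : ℕ, c (m + k) * (aeval x ((Polynomial.derivative)^[l] (hermite m)) : ℝ))
    (hsum : ∀ i ≤ l, ∀ x : ℝ, Summable fun m : ℕ =>
      c (m + k + l) * ((m + k + l).descFactorial (l - i) : ℝ) * (aeval x (hermite m) : ℝ)) :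
    ∀ x : ℝ, iteratedDeriv l (fun y : ℝ => ∑' m : ℕ, c (m + k) * (aeval y (hermite m) : ℝ)) x
      = ∑ i ∈ Finset.range (l + 1),
          (l.choose i : ℝ) * ((-1 : ℝ) ^ i * (k.ascFactorial i : ℝ)) *
            ∑' m : ℕ, c (m + k + l) * ((m + k + l).descFactorial (l - i) : ℝ) *
              (aeval x (hermite m) : ℝ) := by
  intro x
  have hderiv (m : ℕ) : (aeval x (derivative^[l] (hermite m)) : ℝ)
      = m.descFactorial l * aeval x (hermite (m - l)) := by
    simp [iterate_derivative_hermite]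
  rw [hterm x]
  calc ∑' m, c (m + k) * (aeval x (derivative^[l] (hermite m)) : ℝ)
      = ∑' m, c (m + l + k) * (m + l).descFactorial l * aeval x (hermite m) := by
        rw [← tsum_nat_add_of_eq_zero (k := l) fun m hm => by
          simp [hderiv, Nat.descFactorial_eq_zero_iff_lt.mpr hm]]
        simp [hderiv, mul_assoc]
    _ = ∑' m, ∑ i ∈ range (l + 1), (l.choose i : ℝ) * ((-1 : ℝ) ^ i * (k.ascFactorial i : ℝ)) *
          (c (m + k + l) * ((m + k + l).descFactorial (l - i) : ℝ) * aeval x (hermite m)) := by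
        refine tsum_congr fun m => ?_
        rw [Nat.cast_descFactorial_eq_sum (m + l) k l, add_right_comm m l k, mul_sum, sum_mul]
        exact sum_congr rfl fun i _ => by ring
    _ = _ := by
        rw [Summable.tsum_finsetSum fun i hi => (hsum i (by simpa [Nat.lt_succ_iff] using hi) x).mul_left _]
        simp_rw [tsum_mul_left]

/-- For `g = ∑ c_m H_m` and the `k`-fold Hermite shift
`T_k g = ∑ c_{m+k} H_m`, the `l`-th derivative satisfies
`(T_k g)^{(l)} = ∑_{i=0}^{l} C(l,i) α_{k,i} T_{k+i}(g^{(l-i)})`,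
where `α_{k,i} = (-1)^i k(k+1)⋯(k+i-1)`.  The coefficient of `H_m` in
`T_{k+i}(g^{(l-i)})` is `c_{m+k+l} · (m+k+l)(m+k+l-1)⋯(m+k+i+1)
 = c_{m+k+l} · descFactorial (m+k+l) (l-i)`. -/
theorem hermite_shift_iteratedDeriv (c : ℕ → ℝ) (k l : ℕ) (hk : 1 ≤ k) (hl : 1 ≤ l)
    (hterm : ∀ x : ℝ,
      iteratedDeriv l (fun y : ℝ => ∑' m : ℕ, c (m + k) * (aeval y (hermite m) : ℝ)) x
        = ∑' m : ℕ, c (m + k) * (aeval x ((Polynomial.derivative)^[l] (hermite m)) : ℝ))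
    (hsum : ∀ i ≤ l, ∀ x : ℝ, Summable fun m : ℕ =>
      c (m + k + l) * ((m + k + l).descFactorial (l - i) : ℝ) * (aeval x (hermite m) : ℝ)) :
    ∀ x : ℝ, iteratedDeriv l (fun y : ℝ => ∑' m : ℕ, c (m + k) * (aeval y (hermite m) : ℝ)) x
      = ∑ i ∈ Finset.range (l + 1),
          (l.choose i : ℝ) * ((-1 : ℝ) ^ i * (k.ascFactorial i : ℝ)) *
            ∑' m : ℕ, c (m + k + l) * ((m + k + l).descFactorial (l - i) : ℝ) *
              (aeval x (hermite m) : ℝ) :=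
  hermite_shift_iteratedDeriv_general c k l hterm hsum
end

section
/- Let ρ: ℤ → [-1,1] satisfy Σ_{k∈ℤ}|ρ(k)| < ∞, fix an integer M ≥ 2 and a nonzero vector v ∈ ℝ^M with components in {-1,0,1}. Then there is a constant C such that for all n ≥ 1, Σ_{|k_j| ≤ n, 1 ≤ j ≤ M} |ρ(k·v)| Π_{j=1}^{M} |ρ(k_j)| ≤ C ( Σ_{|k| ≤ n} |ρ(k)| )^{M-1}. -/
/-!
Pick a coordinate `j₀` with `v j₀ ≠ 0` and discard the factor `|ρ (k j₀)| ≤ 1`. Once the other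
coordinates are fixed, `k ↦ k · v` is injective in `k j₀`, so the remaining sum over `k j₀` of
`|ρ (k · v)|` is at most `∑' m, |ρ m|`, and the sum over the other `M - 1` coordinates factors as
`(∑_{|m| ≤ n} |ρ m|) ^ (M - 1)`.
-/

open Finset

theorem eq_of_forall_ne_of_sum_mul_eq {ι R : Type*} [Fintype ι] [CommRing R] [NoZeroDivisors R]
    {v : ι → R} {j₀ : ι} (hv : v j₀ ≠ 0) {k k' : ι → R}
    (hoff : ∀ j, j ≠ j₀ → k j = k' j) (hdot : ∑ j, k j * v j = ∑ j, k' j * v j) : k = k' := by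
  have hsingle : ∑ j, (k j - k' j) * v j = (k j₀ - k' j₀) * v j₀ :=
    Fintype.sum_eq_single j₀ fun j hj => by rw [hoff j hj, sub_self, zero_mul]
  have hzero : (k j₀ - k' j₀) * v j₀ = 0 := by
    rw [← hsingle]; simp only [sub_mul, sum_sub_distrib, hdot, sub_self]
  funext j
  by_cases hj : j = j₀
  · subst hj; exact sub_eq_zero.1 ((mul_eq_zero.1 hzero).resolve_right hv)
  · exact hoff j hj

theorem Summable.sum_comp_le_tsum_of_injOn {α β : Type*} {f : α → ℝ} (hf : Summable f)
    (hf0 : ∀ a, 0 ≤ f a) {φ : β → α} {s : Finset β} (hφ : Set.InjOn φ s) :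
    ∑ b ∈ s, f (φ b) ≤ ∑' a, f a := by
  classical
  rw [← sum_image hφ]
  exact hf.sum_le_tsum _ fun a _ => hf0 a

theorem sum_dot_mul_prod_ne_le {ι R : Type*} [Fintype ι] [DecidableEq ι] [CommRing R]
    [NoZeroDivisors R] {v : ι → R} {j₀ : ι} (hv : v j₀ ≠ 0) {f g : R → ℝ} (hf : Summable f)
    (hf0 : ∀ x, 0 ≤ f x) (hg0 : ∀ x, 0 ≤ g x) (A : ι → Finset R) :
    ∑ k ∈ Fintype.piFinset A, f (∑ j, k j * v j) * ∏ j : {j // j ≠ j₀}, g (k j)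
      ≤ (∑' x, f x) * ∏ j : {j // j ≠ j₀}, ∑ x ∈ A j, g x := by
  classical
  set restrict : (ι → R) → {j // j ≠ j₀} → R := fun k j => k j
  set T := Fintype.piFinset fun j : {j // j ≠ j₀} => A j
  have hmaps : ∀ k ∈ Fintype.piFinset A, restrict k ∈ T := fun k hk =>
    Fintype.mem_piFinset.2 fun j => Fintype.mem_piFinset.1 hk j
  have hfiber (r : {j // j ≠ j₀} → R) :
      ∑ k ∈ Fintype.piFinset A with restrict k = r, f (∑ j, k j * v j) ≤ ∑' x, f x := by
    refine hf.sum_comp_le_tsum_of_injOn hf0 fun k hk k' hk' hdot => ?_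
    have hoff : restrict k = restrict k' := (mem_filter.1 hk).2.trans (mem_filter.1 hk').2.symm
    exact eq_of_forall_ne_of_sum_mul_eq hv (fun j hj => congrFun hoff ⟨j, hj⟩) hdot
  calc ∑ k ∈ Fintype.piFinset A, f (∑ j, k j * v j) * ∏ j, g (restrict k j)
      = ∑ r ∈ T,
          (∑ k ∈ Fintype.piFinset A with restrict k = r, f (∑ j, k j * v j)) * ∏ j, g (r j) := by
        rw [← sum_fiberwise_of_maps_to hmaps]
        refine sum_congr rfl fun r _ => ?_
        rw [sum_mul]
        exact sum_congr rfl fun k hk => by rw [(mem_filter.1 hk).2]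
    _ ≤ ∑ r ∈ T, (∑' x, f x) * ∏ j, g (r j) :=
        sum_le_sum fun r _ =>
          mul_le_mul_of_nonneg_right (hfiber r) (prod_nonneg fun j _ => hg0 _)
    _ = (∑' x, f x) * ∏ j : {j // j ≠ j₀}, ∑ x ∈ A j, g x := by
        rw [← mul_sum, prod_univ_sum]

theorem brascamp_lieb_sum_bound'_general (M : ℕ) (ρ : ℤ → ℝ)
    (hρ1 : ∀ k, |ρ k| ≤ 1) (hρ2 : Summable fun k => |ρ k|)
    (v : Fin M → ℤ) (hv0 : v ≠ 0) :
    ∃ C : ℝ, ∀ n : ℕ, 1 ≤ n →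
      ∑ k ∈ Fintype.piFinset (fun _ : Fin M => Finset.Icc (-(n : ℤ)) (n : ℤ)),
          (|ρ (∑ j, k j * v j)| * ∏ j, |ρ (k j)|)
        ≤ C * (∑ k ∈ Finset.Icc (-(n : ℤ)) (n : ℤ), |ρ k|) ^ (M - 1) := by
  obtain ⟨j₀, hj₀⟩ : ∃ j, v j ≠ 0 := Function.ne_iff.1 hv0
  have hcard : Fintype.card {j // j ≠ j₀} = M - 1 := by simp [Fintype.card_subtype_compl]
  refine ⟨∑' k, |ρ k|, fun n _ => ?_⟩
  calc _ ≤ ∑ k ∈ Fintype.piFinset (fun _ : Fin M => Icc (-(n : ℤ)) n),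
          |ρ (∑ j, k j * v j)| * ∏ j : {j // j ≠ j₀}, |ρ (k j)| := by
        refine sum_le_sum fun k _ => mul_le_mul_of_nonneg_left ?_ (abs_nonneg _)
        rw [Fintype.prod_eq_mul_prod_subtype_ne _ j₀]
        exact mul_le_of_le_one_left (prod_nonneg fun _ _ => abs_nonneg _) (hρ1 _)
    _ ≤ _ := sum_dot_mul_prod_ne_le hj₀ hρ2 (fun _ => abs_nonneg _) (fun _ => abs_nonneg _) _
    _ = _ := by rw [prod_const, card_univ, hcard]

/-- For `|ρ| ≤ 1` summable and a nonzero `v` with entries in `{-1,0,1}`,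
`∑_{|k_j|≤n} |ρ(k·v)| ∏_j |ρ(k_j)| ≤ C (∑_{|k|≤n} |ρ(k)|)^{M-1}`. -/
theorem brascamp_lieb_sum_bound' (M : ℕ) (hM : 2 ≤ M) (ρ : ℤ → ℝ)
    (hρ1 : ∀ k, |ρ k| ≤ 1) (hρ2 : Summable fun k => |ρ k|)
    (v : Fin M → ℤ) (hv0 : v ≠ 0) (hv : ∀ j, v j = -1 ∨ v j = 0 ∨ v j = 1) :
    ∃ C : ℝ, ∀ n : ℕ, 1 ≤ n →
      ∑ k ∈ Fintype.piFinset (fun _ : Fin M => Finset.Icc (-(n : ℤ)) (n : ℤ)),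
          (|ρ (∑ j, k j * v j)| * ∏ j, |ρ (k j)|)
        ≤ C * (∑ k ∈ Finset.Icc (-(n : ℤ)) (n : ℤ), |ρ k|) ^ (M - 1) :=
  brascamp_lieb_sum_bound'_general M ρ hρ1 hρ2 v hv0
end
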